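/- Let Ω = (a,b), Ω₁ = (a₁,b₁) with a < a₁ < b₁ < b, and φ_ε(x) = ½[1 + tanh(r(x)/ε)] with r the 1D signed distance to {a₁,b₁}. Then for every w ∈ W^{1,1}(Ω), ∫_Ω w(x) |φ_ε'(x)| dx → w(a₁) + w(b₁) as ε → 0 (using the continuous representative of w). -/

import Mathlib

open MeasureTheory Filter Set Real

noncomputable def Th (x : ℝ) : ℝ := Real.sinh x / Real.cosh x

lemma hasDerivAt_Th (x : ℝ) : HasDerivAt Th (1 / Real.cosh x ^ 2) x := by
  have h := ((Real.hasDerivAt_sinh x).div (Real.hasDerivAt_cosh x) (Real.cosh_pos x).ne')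
  refine h.congr_deriv ?_
  have := Real.cosh_sq_sub_sinh_sq x
  rw [← this]
  ring

lemma abs_Th_le_one (x : ℝ) : |Th x| ≤ 1 := by
  have h1 := Real.cosh_pos x
  have h2 := Real.cosh_sq_sub_sinh_sq x
  rw [Th, abs_div, abs_of_pos h1, div_le_one h1]
  nlinarith [abs_nonneg (Real.sinh x), sq_abs (Real.sinh x)]

lemma Th_tendsto_atTop : Tendsto Th atTop (nhds 1) := by
  have hrw : ∀ x : ℝ, Th x = (1 - Real.exp (-(2*x))) / (1 + Real.exp (-(2*x))) := by
    intro x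
    rw [Th, Real.sinh_eq, Real.cosh_eq]
    have he : Real.exp x ≠ 0 := (Real.exp_pos x).ne'
    rw [show -(2*x) = -x + -x by ring, Real.exp_add]
    have hxx : Real.exp x * Real.exp (-x) = 1 := by rw [← Real.exp_add]; simp
    field_simp
    ring_nf
    linear_combination (2 * Real.exp (-x)) * hxx
  have h0 : Tendsto (fun x : ℝ => Real.exp (-(2*x))) atTop (nhds 0) := by
    apply Real.tendsto_exp_atBot.comp
    exact tendsto_neg_atTop_atBot.comp (tendsto_id.const_mul_atTop (by norm_num : (0:ℝ) < 2))
  have := ((tendsto_const_nhds (x := (1:ℝ))).sub h0).div ((tendsto_const_nhds (x := (1:ℝ))).add h0) (by norm_num)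
  rw [show (1:ℝ) = (1-0)/(1+0) by norm_num]
  exact this.congr (fun x => (hrw x).symm)

lemma Th_tendsto_atBot : Tendsto Th atBot (nhds (-1)) := by
  have hodd : ∀ x, Th (-x) = - Th x := by
    intro x; rw [Th, Th, Real.sinh_neg, Real.cosh_neg, neg_div]
  have := (Th_tendsto_atTop.comp tendsto_neg_atBot_atTop)
  have h2 : Tendsto (fun x => - Th x) atBot (nhds 1) := this.congr (fun x => by simp [hodd, Function.comp])
  simpa using h2.neg

lemma continuous_Th : Continuous Th :=
  Real.continuous_sinh.div Real.continuous_cosh (fun x => (Real.cosh_pos x).ne')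

noncomputable def Kk (a₁ b₁ ε x : ℝ) : ℝ :=
  1 / (2 * ε) * (1 / (Real.cosh (min (x - a₁) (b₁ - x) / ε))^2)

noncomputable def Ph (a₁ b₁ ε x : ℝ) : ℝ :=
  (1/2) * Th ((min x ((a₁+b₁)/2) - a₁)/ε) - (1/2) * Th ((b₁ - max x ((a₁+b₁)/2))/ε)

lemma continuous_Kk (a₁ b₁ ε : ℝ) : Continuous (Kk a₁ b₁ ε) := by
  have hc : Continuous fun x : ℝ => Real.cosh (min (x - a₁) (b₁ - x) / ε) :=
    Real.continuous_cosh.comp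
      (((continuous_id.sub continuous_const).min (continuous_const.sub continuous_id)).div_const ε)
  exact continuous_const.mul
    (continuous_const.div ((hc.pow 2)) (fun x => pow_ne_zero _ (Real.cosh_pos _).ne'))

lemma continuous_Ph (a₁ b₁ ε : ℝ) : Continuous (Ph a₁ b₁ ε) := by
  have h1 : Continuous fun x : ℝ => (min x ((a₁+b₁)/2) - a₁)/ε :=
    (((continuous_id.min continuous_const)).sub continuous_const).div_const ε
  have h2 : Continuous fun x : ℝ => (b₁ - max x ((a₁+b₁)/2))/ε :=
    ((continuous_const.sub (continuous_id.max continuous_const))).div_const ε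
  exact (continuous_const.mul (continuous_Th.comp h1)).sub
    (continuous_const.mul (continuous_Th.comp h2))

lemma abs_Ph_le_one (a₁ b₁ ε x : ℝ) : |Ph a₁ b₁ ε x| ≤ 1 := by
  have t1 := abs_Th_le_one ((min x ((a₁+b₁)/2) - a₁)/ε)
  have t2 := abs_Th_le_one ((b₁ - max x ((a₁+b₁)/2))/ε)
  rw [Ph]
  calc |(1/2) * Th ((min x ((a₁+b₁)/2) - a₁)/ε) - (1/2) * Th ((b₁ - max x ((a₁+b₁)/2))/ε)|
      ≤ |(1/2) * Th ((min x ((a₁+b₁)/2) - a₁)/ε)| + |(1/2) * Th ((b₁ - max x ((a₁+b₁)/2))/ε)| :=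
        abs_sub _ _
    _ ≤ 1 := by rw [abs_mul, abs_mul]; rw [abs_of_pos (by norm_num : (0:ℝ) < 1/2)]; nlinarith

lemma Kk_nonneg {a₁ b₁ ε : ℝ} (hε : 0 < ε) (x : ℝ) : 0 ≤ Kk a₁ b₁ ε x := by
  have := Real.cosh_pos (min (x - a₁) (b₁ - x) / ε)
  rw [Kk]; positivity

lemma Kk_le {a₁ b₁ ε : ℝ} (hε : 0 < ε) (x : ℝ) : Kk a₁ b₁ ε x ≤ 1 / (2*ε) := by
  have h1 := Real.one_le_cosh (min (x - a₁) (b₁ - x) / ε)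
  rw [Kk]
  have h2 : 1 / (Real.cosh (min (x - a₁) (b₁ - x) / ε))^2 ≤ 1 := by
    rw [div_le_one (by positivity)]; nlinarith
  nlinarith [one_div_pos.mpr (by positivity : (0:ℝ) < 2*ε)]

lemma hasDerivAt_Ph (a₁ b₁ : ℝ) (h2 : a₁ < b₁) (ε x : ℝ) :
    HasDerivAt (Ph a₁ b₁ ε) (Kk a₁ b₁ ε x) x := by
  set m : ℝ := (a₁+b₁)/2 with hmdef
  have hma : a₁ < m := by rw [hmdef]; linarith
  have hmb : m < b₁ := by rw [hmdef]; linarith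
  have hsym : m - a₁ = b₁ - m := by rw [hmdef]; ring
  have hg₁ : ∀ y : ℝ, HasDerivAt (fun y => (1/2) * Th ((y - a₁)/ε) - (1/2) * Th ((b₁ - m)/ε))
      (1 / (2*ε) * (1 / (Real.cosh ((y - a₁)/ε))^2)) y := by
    intro y
    have hi : HasDerivAt (fun y : ℝ => (y - a₁)/ε) (1/ε) y := by
      simpa using ((hasDerivAt_id y).sub_const a₁).div_const ε
    have := (((hasDerivAt_Th _).comp y hi).const_mul (1/2 : ℝ)).sub_const ((1/2) * Th ((b₁ - m)/ε))
    refine this.congr_deriv ?_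
    ring
  have hg₂ : ∀ y : ℝ, HasDerivAt (fun y => (1/2) * Th ((m - a₁)/ε) - (1/2) * Th ((b₁ - y)/ε))
      (1 / (2*ε) * (1 / (Real.cosh ((b₁ - y)/ε))^2)) y := by
    intro y
    have hi : HasDerivAt (fun y : ℝ => (b₁ - y)/ε) (-1/ε) y := by
      simpa using ((hasDerivAt_id y).const_sub b₁).div_const ε
    have := (hasDerivAt_const y ((1/2) * Th ((m - a₁)/ε))).sub
      (((hasDerivAt_Th _).comp y hi).const_mul (1/2 : ℝ))
    refine this.congr_deriv ?_
    ring
  have hminlt : ∀ y : ℝ, y ≤ m → min (y - a₁) (b₁ - y) = y - a₁ := by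
    intro y hy; apply min_eq_left; rw [hmdef] at hy; linarith
  have hmingt : ∀ y : ℝ, m ≤ y → min (y - a₁) (b₁ - y) = b₁ - y := by
    intro y hy; apply min_eq_right; rw [hmdef] at hy; linarith
  have hPh₁ : ∀ y : ℝ, y ≤ m → Ph a₁ b₁ ε y = (1/2) * Th ((y - a₁)/ε) - (1/2) * Th ((b₁ - m)/ε) := by
    intro y hy; rw [Ph, min_eq_left hy, max_eq_right hy]
  have hPh₂ : ∀ y : ℝ, m ≤ y → Ph a₁ b₁ ε y = (1/2) * Th ((m - a₁)/ε) - (1/2) * Th ((b₁ - y)/ε) := by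
    intro y hy; rw [Ph, min_eq_right hy, max_eq_left hy]
  rcases lt_trichotomy x m with hx | hx | hx
  · have hK : Kk a₁ b₁ ε x = 1 / (2*ε) * (1 / (Real.cosh ((x - a₁)/ε))^2) := by
      rw [Kk, hminlt x hx.le]
    rw [hK]
    apply (hg₁ x).congr_of_eventuallyEq
    filter_upwards [Iio_mem_nhds hx] with y hy
    exact hPh₁ y (le_of_lt hy)
  · subst hx
    have e1 : HasDerivWithinAt (Ph a₁ b₁ ε) (Kk a₁ b₁ ε m) (Iic m) m := by
      have hK : Kk a₁ b₁ ε m = 1 / (2*ε) * (1 / (Real.cosh ((m - a₁)/ε))^2) := by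
        rw [Kk, hminlt m le_rfl]
      rw [hK]
      exact ((hg₁ m).hasDerivWithinAt).congr (fun y hy => hPh₁ y hy) (hPh₁ m le_rfl)
    have e2 : HasDerivWithinAt (Ph a₁ b₁ ε) (Kk a₁ b₁ ε m) (Ici m) m := by
      have hK2 : Kk a₁ b₁ ε m = 1 / (2*ε) * (1 / (Real.cosh ((b₁ - m)/ε))^2) := by
        rw [Kk, hmingt m le_rfl]
      rw [hK2]
      exact ((hg₂ m).hasDerivWithinAt).congr (fun y hy => hPh₂ y hy) (hPh₂ m le_rfl)
    have := e1.union e2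
    rw [Iic_union_Ici] at this
    rwa [hasDerivWithinAt_univ] at this
  · have hK : Kk a₁ b₁ ε x = 1 / (2*ε) * (1 / (Real.cosh ((b₁ - x)/ε))^2) := by
      rw [Kk, hmingt x hx.le]
    rw [hK]
    apply (hg₂ x).congr_of_eventuallyEq
    filter_upwards [Ioi_mem_nhds hx] with y hy
    exact hPh₂ y (le_of_lt hy)

lemma Kk_integral (a₁ b₁ : ℝ) (h2 : a₁ < b₁) (ε t x : ℝ) :
    ∫ s in t..x, Kk a₁ b₁ ε s = Ph a₁ b₁ ε x - Ph a₁ b₁ ε t :=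
  intervalIntegral.integral_eq_sub_of_hasDerivAt (fun s _ => hasDerivAt_Ph a₁ b₁ h2 ε s)
    ((continuous_Kk a₁ b₁ ε).intervalIntegrable t x)

lemma key_identity (a a₁ b₁ b : ℝ) (h1 : a < a₁) (h2 : a₁ < b₁) (h3 : b₁ < b)
    (w w'' : ℝ → ℝ) (hw''m : StronglyMeasurable w'')
    (hw''int : IntegrableOn w'' (Ioo a b))
    (hconn : ∀ x ∈ Ioo a b, w x = w a + ∫ t in Ioc a x, w'' t)
    {ε : ℝ} (hε : 0 < ε) :
    ∫ x in Ioo a b, w x * Kk a₁ b₁ ε x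
      = w a * (Ph a₁ b₁ ε b - Ph a₁ b₁ ε a)
        + ∫ t in Ioo a b, w'' t * (Ph a₁ b₁ ε b - Ph a₁ b₁ ε t) := by
  haveI hfin : IsFiniteMeasure (volume.restrict (Ioo a b)) := ⟨by
    rw [Measure.restrict_apply_univ]
    exact measure_Ioo_lt_top⟩
  have hKc := continuous_Kk a₁ b₁ ε
  have hKint : IntegrableOn (Kk a₁ b₁ ε) (Ioo a b) :=
    (intervalIntegrable_iff_integrableOn_Ioo_of_le (by linarith : a ≤ b)).mp
      (hKc.intervalIntegrable a b)
  set f : ℝ → ℝ → ℝ := fun x t => (Ioc a x).indicator w'' t * Kk a₁ b₁ ε x with hf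
  have hfm : StronglyMeasurable (Function.uncurry f) := by
    have hrw : Function.uncurry f = fun p : ℝ × ℝ =>
        ({q : ℝ × ℝ | a < q.2 ∧ q.2 ≤ q.1}.indicator (fun q => w'' q.2) p) * Kk a₁ b₁ ε p.1 := by
      funext p
      simp only [Function.uncurry, hf, indicator, mem_Ioc, mem_setOf_eq]
    rw [hrw]
    exact ((hw''m.comp_measurable measurable_snd).indicator
        ((measurableSet_lt measurable_const measurable_snd).inter
          (measurableSet_le measurable_snd measurable_fst))).mul
      ((hKc.stronglyMeasurable).comp_measurable measurable_fst)
  have hfint : Integrable (Function.uncurry f) ((volume.restrict (Ioo a b)).prod (volume.restrict (Ioo a b))) := by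
    have hb : Integrable (fun p : ℝ × ℝ => (1/(2*ε)) * |w'' p.2|) ((volume.restrict (Ioo a b)).prod (volume.restrict (Ioo a b))) :=
      Integrable.mul_prod (integrable_const (1/(2*ε))) hw''int.abs
    apply hb.mono hfm.aestronglyMeasurable
    apply Eventually.of_forall
    intro p
    have h1 : |(Ioc a p.1).indicator w'' p.2| ≤ |w'' p.2| := by
      rw [indicator]; split
      · exact le_refl _
      · simp [abs_nonneg]
    have h2 : |Kk a₁ b₁ ε p.1| ≤ 1/(2*ε) := by
      rw [abs_of_nonneg (Kk_nonneg hε _)]; exact Kk_le hε _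
    have h3 : (0:ℝ) ≤ 1/(2*ε) := by positivity
    simp only [Function.uncurry, hf, norm_mul, Real.norm_eq_abs, abs_abs, abs_of_nonneg h3]
    exact le_trans (mul_le_mul h1 h2 (abs_nonneg _) (abs_nonneg _)) (le_of_eq (mul_comm _ _))
  have hinner : ∀ x ∈ Ioo a b, (∫ t, f x t ∂(volume.restrict (Ioo a b))) = (∫ t in Ioc a x, w'' t) * Kk a₁ b₁ ε x := by
    intro x hx
    simp only [hf]
    rw [integral_mul_const]
    congr 1
    rw [integral_indicator measurableSet_Ioc, Measure.restrict_restrict measurableSet_Ioc,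
        inter_eq_left.mpr (fun t ht => mem_Ioo.mpr ⟨ht.1, lt_of_le_of_lt ht.2 hx.2⟩)]
  have hsplit : ∫ x in Ioo a b, w x * Kk a₁ b₁ ε x
      = ∫ x in Ioo a b, (w a * Kk a₁ b₁ ε x + (∫ t, f x t ∂(volume.restrict (Ioo a b)))) := by
    apply setIntegral_congr_fun measurableSet_Ioo
    intro x hx
    dsimp only
    rw [hconn x hx, hinner x hx]
    ring
  have I1 : Integrable (fun x => w a * Kk a₁ b₁ ε x) (volume.restrict (Ioo a b)) := hKint.const_mul _
  have I2 : Integrable (fun x => ∫ t, f x t ∂(volume.restrict (Ioo a b))) (volume.restrict (Ioo a b)) := hfint.integral_prod_left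
  have hKio : ∫ x in Ioo a b, Kk a₁ b₁ ε x = Ph a₁ b₁ ε b - Ph a₁ b₁ ε a := by
    rw [← integral_Ioc_eq_integral_Ioo, ← intervalIntegral.integral_of_le (by linarith : a ≤ b)]
    exact Kk_integral a₁ b₁ h2 ε a b
  have houter : ∫ t, (∫ x, f x t ∂(volume.restrict (Ioo a b))) ∂(volume.restrict (Ioo a b))
      = ∫ t in Ioo a b, w'' t * (Ph a₁ b₁ ε b - Ph a₁ b₁ ε t) := by
    apply setIntegral_congr_fun measurableSet_Ioo
    intro t ht
    dsimp only
    have hfe : (fun x => f x t) = (Ici t).indicator (fun x => w'' t * Kk a₁ b₁ ε x) := by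
      funext x
      simp only [hf, indicator, mem_Ioc, mem_Ici]
      by_cases htx : t ≤ x
      · simp [htx, ht.1]
      · simp [htx]
    rw [hfe, integral_indicator measurableSet_Ici, Measure.restrict_restrict measurableSet_Ici,
        show Ici t ∩ Ioo a b = Ico t b from by
          ext y
          simp only [mem_inter_iff, mem_Ici, mem_Ioo, mem_Ico]
          constructor
          · rintro ⟨hy1, _, hy3⟩; exact ⟨hy1, hy3⟩
          · rintro ⟨hy1, hy2⟩; exact ⟨hy1, lt_of_lt_of_le ht.1 hy1, hy2⟩]
    rw [integral_Ico_eq_integral_Ioo, integral_const_mul]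
    congr 1
    rw [← integral_Ioc_eq_integral_Ioo, ← intervalIntegral.integral_of_le (le_of_lt ht.2)]
    exact Kk_integral a₁ b₁ h2 ε t b
  rw [hsplit]
  have : ∫ x in Ioo a b, (w a * Kk a₁ b₁ ε x + (∫ t, f x t ∂(volume.restrict (Ioo a b))))
      = (∫ x, w a * Kk a₁ b₁ ε x ∂(volume.restrict (Ioo a b))) + ∫ x, (∫ t, f x t ∂(volume.restrict (Ioo a b))) ∂(volume.restrict (Ioo a b)) := integral_add I1 I2
  rw [this, integral_const_mul, integral_integral_swap hfint, houter, hKio]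

lemma Th_div_tendsto_pos {c : ℝ} (hc : 0 < c) :
    Tendsto (fun ε : ℝ => Th (c / ε)) (nhdsWithin 0 (Ioi 0)) (nhds 1) := by
  apply Th_tendsto_atTop.comp
  have h := tendsto_inv_nhdsGT_zero (𝕜 := ℝ)
  have := h.const_mul_atTop hc
  exact this.congr (fun ε => by rw [div_eq_mul_inv])

lemma Th_div_tendsto_neg {c : ℝ} (hc : c < 0) :
    Tendsto (fun ε : ℝ => Th (c / ε)) (nhdsWithin 0 (Ioi 0)) (nhds (-1)) := by
  apply Th_tendsto_atBot.comp
  have h := (tendsto_inv_nhdsGT_zero (𝕜 := ℝ)).const_mul_atTop (neg_pos.mpr hc)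
  have h2 := tendsto_neg_atTop_atBot.comp h
  exact h2.congr (fun ε => by simp only [Function.comp]; rw [div_eq_mul_inv]; ring)

/-- 1D surface-delta approximation. For Ω = (a,b), Ω₁ = (a₁,b₁) with
a < a₁ < b₁ < b, r(x) = min(x−a₁, b₁−x) and φ_ε(x) = ½[1 + tanh(r(x)/ε)], one has
|φ_ε'(x)| = (1/(2ε)) sech²(r(x)/ε) a.e., and for every w ∈ W^{1,1}((a,b)) (taken with
its absolutely continuous representative, i.e. w x = w a + ∫_a^x w' with w' ∈ L¹),
∫_Ω w |φ_ε'| dx → w(a₁) + w(b₁) as ε → 0. -/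
theorem surface_delta_approx_1D
    (a a₁ b₁ b : ℝ) (h1 : a < a₁) (h2 : a₁ < b₁) (h3 : b₁ < b)
    (w w' : ℝ → ℝ)
    (hw' : IntegrableOn w' (Ioo a b))
    (hac : ∀ x ∈ Icc a b, w x = w a + ∫ t in a..x, w' t) :
    Tendsto (fun ε : ℝ => ∫ x in Ioo a b,
        w x * (1 / (2 * ε) * (1 / (Real.cosh (min (x - a₁) (b₁ - x) / ε))^2)))
      (nhdsWithin 0 (Ioi 0)) (nhds (w a₁ + w b₁)) := by
  have ham := hw'.1
  set w'' : ℝ → ℝ := ham.mk w' with hw''def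
  have hw''m : StronglyMeasurable w'' := ham.stronglyMeasurable_mk
  have hae : w' =ᵐ[volume.restrict (Ioo a b)] w'' := ham.ae_eq_mk
  have hw''int : IntegrableOn w'' (Ioo a b) := hw'.congr hae
  have hsub_eq : ∀ s : Set ℝ, s ⊆ Ioo a b → ∫ t in s, w' t = ∫ t in s, w'' t :=
    fun s hs => integral_congr_ae (ae_restrict_of_ae_restrict_of_subset hs hae)
  have hconn : ∀ x ∈ Ioo a b, w x = w a + ∫ t in Ioc a x, w'' t := by
    intro x hx
    rw [hac x (Ioo_subset_Icc_self hx), intervalIntegral.integral_of_le hx.1.le,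
      hsub_eq _ (fun t ht => mem_Ioo.mpr ⟨ht.1, lt_of_le_of_lt ht.2 hx.2⟩)]
  -- limits of Ph at the endpoints
  have hPhb : Tendsto (fun ε => Ph a₁ b₁ ε b) (nhdsWithin 0 (Ioi 0)) (nhds 1) := by
    have he : (fun ε => Ph a₁ b₁ ε b) = fun ε =>
        (1/2) * Th ((((a₁+b₁)/2) - a₁)/ε) - (1/2) * Th ((b₁ - b)/ε) := by
      funext ε
      rw [Ph, min_eq_right (by linarith), max_eq_left (by linarith)]
    rw [he]
    have t1 := (Th_div_tendsto_pos (by linarith : 0 < ((a₁+b₁)/2) - a₁)).const_mul (1/2:ℝ)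
    have t2 := (Th_div_tendsto_neg (by linarith : b₁ - b < 0)).const_mul (1/2:ℝ)
    have h12 := t1.sub t2
    rw [show (1:ℝ)/2 * 1 - 1/2 * (-1) = 1 from by norm_num] at h12
    exact h12
  have hPha : Tendsto (fun ε => Ph a₁ b₁ ε a) (nhdsWithin 0 (Ioi 0)) (nhds (-1)) := by
    have he : (fun ε => Ph a₁ b₁ ε a) = fun ε =>
        (1/2) * Th ((a - a₁)/ε) - (1/2) * Th ((b₁ - (a₁+b₁)/2)/ε) := by
      funext ε
      rw [Ph, min_eq_left (by linarith), max_eq_right (by linarith)]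
    rw [he]
    have t1 := (Th_div_tendsto_neg (by linarith : a - a₁ < 0)).const_mul (1/2:ℝ)
    have t2 := (Th_div_tendsto_pos (by linarith : 0 < b₁ - (a₁+b₁)/2)).const_mul (1/2:ℝ)
    have h12 := t1.sub t2
    rw [show (1:ℝ)/2 * (-1) - 1/2 * 1 = -1 from by norm_num] at h12
    exact h12
  -- pointwise limits of Ph
  have hPt : ∀ t : ℝ, t ≠ a₁ → t ≠ b₁ →
      Tendsto (fun ε => Ph a₁ b₁ ε t) (nhdsWithin 0 (Ioi 0))
        (nhds ((1/2) * (if a₁ < t then (1:ℝ) else -1) - (1/2) * (if t < b₁ then (1:ℝ) else -1))) := by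
    intro t hta htb
    have hc₁ : Tendsto (fun ε : ℝ => Th ((min t ((a₁+b₁)/2) - a₁)/ε)) (nhdsWithin 0 (Ioi 0))
        (nhds (if a₁ < t then (1:ℝ) else -1)) := by
      rcases lt_or_gt_of_ne hta with h | h
      · rw [if_neg (not_lt.mpr h.le)]
        exact Th_div_tendsto_neg (by rw [min_eq_left (by linarith)]; linarith)
      · rw [if_pos h]
        apply Th_div_tendsto_pos
        rcases le_total t ((a₁+b₁)/2) with h' | h'
        · rw [min_eq_left h']; linarith
        · rw [min_eq_right h']; linarith
    have hc₂ : Tendsto (fun ε : ℝ => Th ((b₁ - max t ((a₁+b₁)/2))/ε)) (nhdsWithin 0 (Ioi 0))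
        (nhds (if t < b₁ then (1:ℝ) else -1)) := by
      rcases lt_or_gt_of_ne htb with h | h
      · rw [if_pos h]
        apply Th_div_tendsto_pos
        rcases le_total t ((a₁+b₁)/2) with h' | h'
        · rw [max_eq_right h']; linarith
        · rw [max_eq_left h']; linarith
      · rw [if_neg (not_lt.mpr h.le)]
        exact Th_div_tendsto_neg (by rw [max_eq_left (by linarith)]; linarith)
    exact (hc₁.const_mul (1/2:ℝ)).sub (hc₂.const_mul (1/2:ℝ))
  -- dominated convergence
  set G : ℝ → ℝ := fun t => (Iio a₁).indicator w'' t + (Iio b₁).indicator w'' t with hG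
  have hDCT : Tendsto (fun ε => ∫ t in Ioo a b, w'' t * (Ph a₁ b₁ ε b - Ph a₁ b₁ ε t))
      (nhdsWithin 0 (Ioi 0)) (nhds (∫ t in Ioo a b, G t)) := by
    apply tendsto_integral_filter_of_dominated_convergence (bound := fun t => |w'' t| * 2)
    · exact Eventually.of_forall fun ε =>
        hw''m.aestronglyMeasurable.mul
          ((continuous_const.sub (continuous_Ph a₁ b₁ ε)).aestronglyMeasurable)
    · apply Eventually.of_forall
      intro ε
      apply Eventually.of_forall
      intro t
      rw [Real.norm_eq_abs, abs_mul]
      apply mul_le_mul_of_nonneg_left _ (abs_nonneg _)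
      calc |Ph a₁ b₁ ε b - Ph a₁ b₁ ε t| ≤ |Ph a₁ b₁ ε b| + |Ph a₁ b₁ ε t| := abs_sub _ _
        _ ≤ 2 := by linarith [abs_Ph_le_one a₁ b₁ ε b, abs_Ph_le_one a₁ b₁ ε t]
    · exact hw''int.abs.mul_const 2
    · have hnull : ∀ᵐ t ∂(volume.restrict (Ioo a b)), t ≠ a₁ ∧ t ≠ b₁ := by
        apply ae_restrict_of_ae
        have hz : volume ({a₁, b₁} : Set ℝ) = 0 := (Set.to_countable _).measure_zero _
        have := measure_eq_zero_iff_ae_notMem.mp hz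
        filter_upwards [this] with t ht
        simp only [mem_insert_iff, mem_singleton_iff, not_or] at ht
        exact ht
      filter_upwards [hnull] with t ht
      have h0 := (hPhb.sub (hPt t ht.1 ht.2)).const_mul (w'' t)
      convert h0 using 2
      rcases lt_or_gt_of_ne ht.1 with hta | hta
      · have htb : t < b₁ := by linarith
        rw [hG]
        simp only [indicator_of_mem (mem_Iio.mpr hta), indicator_of_mem (mem_Iio.mpr htb),
          if_neg (not_lt.mpr hta.le), if_pos htb]
        ring
      · rcases lt_or_gt_of_ne ht.2 with htb | htb
        · rw [hG]
          simp only [indicator_of_notMem (fun hh => absurd (mem_Iio.mp hh) (not_lt.mpr hta.le)),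
            indicator_of_mem (mem_Iio.mpr htb), if_pos hta, if_pos htb]
          ring
        · rw [hG]
          simp only [indicator_of_notMem (fun hh => absurd (mem_Iio.mp hh) (not_lt.mpr hta.le)),
            indicator_of_notMem (fun hh => absurd (mem_Iio.mp hh) (not_lt.mpr htb.le)),
            if_pos hta, if_neg (not_lt.mpr htb.le)]
          ring
  -- final value computation
  have hval : w a * (1 - (-1)) + ∫ t in Ioo a b, G t = w a₁ + w b₁ := by
    have i1 : Integrable ((Iio a₁).indicator w'') (volume.restrict (Ioo a b)) :=
      hw''int.indicator measurableSet_Iio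
    have i2 : Integrable ((Iio b₁).indicator w'') (volume.restrict (Ioo a b)) :=
      hw''int.indicator measurableSet_Iio
    have e1 : ∫ t in Ioo a b, G t
        = (∫ t in Ioo a a₁, w'' t) + ∫ t in Ioo a b₁, w'' t := by
      rw [hG, integral_add i1 i2, integral_indicator measurableSet_Iio,
        integral_indicator measurableSet_Iio,
        Measure.restrict_restrict measurableSet_Iio,
        Measure.restrict_restrict measurableSet_Iio,
        show Iio a₁ ∩ Ioo a b = Ioo a a₁ from by
          ext y
          simp only [mem_inter_iff, mem_Iio, mem_Ioo]
          constructor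
          · rintro ⟨hy1, hy2, _⟩; exact ⟨hy2, hy1⟩
          · rintro ⟨hy1, hy2⟩; exact ⟨hy2, hy1, by linarith⟩,
        show Iio b₁ ∩ Ioo a b = Ioo a b₁ from by
          ext y
          simp only [mem_inter_iff, mem_Iio, mem_Ioo]
          constructor
          · rintro ⟨hy1, hy2, _⟩; exact ⟨hy2, hy1⟩
          · rintro ⟨hy1, hy2⟩; exact ⟨hy2, hy1, by linarith⟩]
    have e2 : ∫ t in Ioo a a₁, w'' t = w a₁ - w a := by
      rw [← hsub_eq _ (fun t ht => mem_Ioo.mpr ⟨ht.1, by linarith [ht.2]⟩),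
        ← integral_Ioc_eq_integral_Ioo, ← intervalIntegral.integral_of_le h1.le]
      have h := hac a₁ ⟨h1.le, by linarith⟩
      linarith
    have e3 : ∫ t in Ioo a b₁, w'' t = w b₁ - w a := by
      rw [← hsub_eq _ (fun t ht => mem_Ioo.mpr ⟨ht.1, by linarith [ht.2]⟩),
        ← integral_Ioc_eq_integral_Ioo, ← intervalIntegral.integral_of_le (by linarith : a ≤ b₁)]
      have h := hac b₁ ⟨by linarith, by linarith⟩
      linarith
    rw [e1, e2, e3]
    ring
  have hfinal := ((hPhb.sub hPha).const_mul (w a)).add hDCT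
  rw [hval] at hfinal
  apply hfinal.congr'
  filter_upwards [self_mem_nhdsWithin] with ε hε
  exact (key_identity a a₁ b₁ b h1 h2 h3 w w'' hw''m hw''int hconn hε).symm
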